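/- For all natural numbers n and a with a ≥ 2n, H₀(2a − n, a) = H₀(3n, 2n). -/

import Mathlib

/-- The number of covering pairs (arcs of the Hasse diagram) of a partial order `P`. -/
noncomputable def nCovers {α : Type*} (P : PartialOrder α) : ℕ :=
  letI := P
  Nat.card {q : α × α // q.1 ⋖ q.2}

/-- `P` has no isolated points: every element belongs to some covering pair. -/
def NoIsolated {α : Type*} (P : PartialOrder α) : Prop :=
  letI := P
  ∀ x : α, ∃ y, x ⋖ y ∨ y ⋖ x

/-- Two partial orders on `Fin p` are equivalent iff they are order-isomorphic. -/
def posetIsoSetoid (p : ℕ) : Setoid (PartialOrder (Fin p)) where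
  r P Q := Nonempty (@OrderIso (Fin p) (Fin p) P.toPreorder.toLE Q.toPreorder.toLE)
  iseqv := by
    refine ⟨fun P => ⟨@OrderIso.refl _ P.toPreorder.toLE⟩, ?_, ?_⟩
    · rintro P Q ⟨e⟩
      exact ⟨@OrderIso.symm _ _ P.toPreorder.toLE Q.toPreorder.toLE e⟩
    · rintro P Q R ⟨e⟩ ⟨f⟩
      exact ⟨@OrderIso.trans _ _ _ P.toPreorder.toLE Q.toPreorder.toLE R.toPreorder.toLE e f⟩

/-- `H p a`: the number of isomorphism classes of partial orders on `Fin p`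
with exactly `a` covering pairs. -/
noncomputable def H (p a : ℕ) : ℕ :=
  Nat.card (Quotient ((posetIsoSetoid p).comap
    (Subtype.val : {P : PartialOrder (Fin p) // nCovers P = a} → PartialOrder (Fin p))))

/-- `H0 p a`: the number of isomorphism classes of partial orders on `Fin p`
with exactly `a` covering pairs and no isolated point. -/
noncomputable def H0 (p a : ℕ) : ℕ :=
  Nat.card (Quotient ((posetIsoSetoid p).comap
    (Subtype.val : {P : PartialOrder (Fin p) // nCovers P = a ∧ NoIsolated P} →
      PartialOrder (Fin p))))


/-- instance-free order-isomorphism relation between partial orders on possibly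
different carriers -/
def ISO {α β : Type*} (P : PartialOrder α) (Q : PartialOrder β) : Prop :=
  Nonempty (@OrderIso α β P.toPreorder.toLE Q.toPreorder.toLE)

lemma ISO.refl {α : Type*} (P : PartialOrder α) : ISO P P :=
  ⟨@OrderIso.refl _ P.toPreorder.toLE⟩

lemma ISO.symm {α β : Type*} {P : PartialOrder α} {Q : PartialOrder β}
    (h : ISO P Q) : ISO Q P := by
  obtain ⟨e⟩ := h
  exact ⟨@OrderIso.symm _ _ P.toPreorder.toLE Q.toPreorder.toLE e⟩

lemma ISO.trans {α β γ : Type*} {P : PartialOrder α} {Q : PartialOrder β}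
    {R : PartialOrder γ} (h : ISO P Q) (h' : ISO Q R) : ISO P R := by
  obtain ⟨e⟩ := h; obtain ⟨f⟩ := h'
  exact ⟨@OrderIso.trans _ _ _ P.toPreorder.toLE Q.toPreorder.toLE R.toPreorder.toLE e f⟩

section Transfer
variable {α β : Type*} [Pα : PartialOrder α] [Pβ : PartialOrder β]

lemma nCovers_congr (e : α ≃o β) : nCovers Pα = nCovers Pβ := by
  apply Nat.card_congr
  exact Equiv.subtypeEquiv (Equiv.prodCongr e.toEquiv e.toEquiv)
    (fun q => by simpa using (OrderIso.map_covBy e (x := q.1) (y := q.2)).symm)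

lemma noIsolated_of_iso (e : α ≃o β) (h : NoIsolated Pα) : NoIsolated Pβ := by
  intro y
  obtain ⟨z, hz⟩ := h (e.symm y)
  refine ⟨e z, ?_⟩
  rcases hz with hz | hz
  · left
    have := (apply_covBy_apply_iff e (a := e.symm y) (b := z)).2 hz
    simpa using this
  · right
    have := (apply_covBy_apply_iff e (a := z) (b := e.symm y)).2 hz
    simpa using this

end Transfer

lemma ISO.nCovers_eq {α β : Type*} {P : PartialOrder α} {Q : PartialOrder β}
    (h : ISO P Q) : nCovers P = nCovers Q := by
  obtain ⟨e⟩ := h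
  letI := P; letI := Q
  exact nCovers_congr e

lemma ISO.noIsolated_iff {α β : Type*} {P : PartialOrder α} {Q : PartialOrder β}
    (h : ISO P Q) : NoIsolated P ↔ NoIsolated Q := by
  obtain ⟨e⟩ := h
  letI := P; letI := Q
  exact ⟨noIsolated_of_iso e, noIsolated_of_iso e.symm⟩


section SumCov
variable {α β : Type*} [Pα : PartialOrder α] [Pβ : PartialOrder β]

lemma inl_covBy_inl_iff {a b : α} : (Sum.inl a : α ⊕ β) ⋖ Sum.inl b ↔ a ⋖ b := by
  constructor
  · rintro ⟨h1, h2⟩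
    exact ⟨Sum.inl_lt_inl_iff.1 h1,
      fun c hc hc' => h2 (Sum.inl_lt_inl_iff.2 hc) (Sum.inl_lt_inl_iff.2 hc')⟩
  · rintro ⟨h1, h2⟩
    refine ⟨Sum.inl_lt_inl_iff.2 h1, ?_⟩
    rintro (c | c) hc hc'
    · exact h2 (Sum.inl_lt_inl_iff.1 hc) (Sum.inl_lt_inl_iff.1 hc')
    · exact Sum.not_inl_le_inr hc.le

lemma inr_covBy_inr_iff {a b : β} : (Sum.inr a : α ⊕ β) ⋖ Sum.inr b ↔ a ⋖ b := by
  constructor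
  · rintro ⟨h1, h2⟩
    exact ⟨Sum.inr_lt_inr_iff.1 h1,
      fun c hc hc' => h2 (Sum.inr_lt_inr_iff.2 hc) (Sum.inr_lt_inr_iff.2 hc')⟩
  · rintro ⟨h1, h2⟩
    refine ⟨Sum.inr_lt_inr_iff.2 h1, ?_⟩
    rintro (c | c) hc hc'
    · exact Sum.not_inr_le_inl hc.le
    · exact h2 (Sum.inr_lt_inr_iff.1 hc) (Sum.inr_lt_inr_iff.1 hc')

lemma not_inl_covBy_inr {a : α} {b : β} : ¬ (Sum.inl a : α ⊕ β) ⋖ Sum.inr b :=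
  fun h => Sum.not_inl_le_inr h.lt.le

lemma not_inr_covBy_inl {a : α} {b : β} : ¬ (Sum.inr b : α ⊕ β) ⋖ Sum.inl a :=
  fun h => Sum.not_inr_le_inl h.lt.le

end SumCov


section SumCovEq
variable {α β : Type*} [Pα : PartialOrder α] [Pβ : PartialOrder β]

/-- from covers of the pieces to covers of the disjoint sum -/
def sumCoversFun :
    {q : α × α // q.1 ⋖ q.2} ⊕ {q : β × β // q.1 ⋖ q.2} →
      {q : (α ⊕ β) × (α ⊕ β) // q.1 ⋖ q.2}
  | Sum.inl ⟨(x, y), h⟩ => ⟨(Sum.inl x, Sum.inl y), by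
      constructor
      · exact Sum.inl_lt_inl_iff.2 h.1
      · rintro (c | c) hc hc'
        · exact h.2 (Sum.inl_lt_inl_iff.1 hc) (Sum.inl_lt_inl_iff.1 hc')
        · exact Sum.not_inl_le_inr hc.le⟩
  | Sum.inr ⟨(x, y), h⟩ => ⟨(Sum.inr x, Sum.inr y), by
      constructor
      · exact Sum.inr_lt_inr_iff.2 h.1
      · rintro (c | c) hc hc'
        · exact Sum.not_inr_le_inl hc.le
        · exact h.2 (Sum.inr_lt_inr_iff.1 hc) (Sum.inr_lt_inr_iff.1 hc')⟩

lemma sumCoversFun_bijective :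
    Function.Bijective (sumCoversFun (α := α) (β := β)) := by
  constructor
  · rintro (⟨⟨x, y⟩, h⟩ | ⟨⟨x, y⟩, h⟩) (⟨⟨x', y'⟩, h'⟩ | ⟨⟨x', y'⟩, h'⟩) he <;>
      simp [sumCoversFun, Subtype.ext_iff, Prod.ext_iff] at he <;>
      simp [Subtype.ext_iff, Prod.ext_iff, he]
  · rintro ⟨⟨(x | x), (y | y)⟩, h⟩
    · exact ⟨Sum.inl ⟨(x, y), by
        refine ⟨Sum.inl_lt_inl_iff.1 h.1, fun c hc hc' => ?_⟩
        exact h.2 (Sum.inl_lt_inl_iff.2 hc) (Sum.inl_lt_inl_iff.2 hc')⟩, rfl⟩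
    · exact absurd h.lt.le Sum.not_inl_le_inr
    · exact absurd h.lt.le Sum.not_inr_le_inl
    · exact ⟨Sum.inr ⟨(x, y), by
        refine ⟨Sum.inr_lt_inr_iff.1 h.1, fun c hc hc' => ?_⟩
        exact h.2 (Sum.inr_lt_inr_iff.2 hc) (Sum.inr_lt_inr_iff.2 hc')⟩, rfl⟩

end SumCovEq

/-- the disjoint-sum partial order, as an explicit term -/
def sumOrder {α β : Type*} (P : PartialOrder α) (Q : PartialOrder β) :
    PartialOrder (α ⊕ β) :=
  letI := P; letI := Q; inferInstance

/-- the subtype partial order, as an explicit term -/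
def subOrder {α : Type*} (P : PartialOrder α) (s : α → Prop) :
    PartialOrder {x // s x} :=
  letI := P; inferInstance

/-- pull back a partial order along an equivalence -/
def pullback {α β : Type*} (e : α ≃ β) (Q : PartialOrder β) : PartialOrder α :=
  letI := Q; PartialOrder.lift e e.injective

lemma iso_pullback {α β : Type*} (e : α ≃ β) (Q : PartialOrder β) :
    ISO (pullback e Q) Q := by
  letI := Q
  exact ⟨{ toEquiv := e, map_rel_iff' := Iff.rfl }⟩

lemma nCovers_sumOrder {α β : Type*} [Finite α] [Finite β]
    (P : PartialOrder α) (Q : PartialOrder β) :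
    nCovers (sumOrder P Q) = nCovers P + nCovers Q := by
  letI := P; letI := Q
  rw [show nCovers (sumOrder P Q) =
    Nat.card {q : (α ⊕ β) × (α ⊕ β) // q.1 ⋖ q.2} from rfl]
  rw [← Nat.card_congr (Equiv.ofBijective _ sumCoversFun_bijective)]
  rw [Nat.card_sum]
  rfl

lemma noIsolated_sumOrder {α β : Type*} {P : PartialOrder α} {Q : PartialOrder β}
    (hP : NoIsolated P) (hQ : NoIsolated Q) : NoIsolated (sumOrder P Q) := by
  letI := P; letI := Q
  rintro (x | x)
  · obtain ⟨y, hy | hy⟩ := hP x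
    · exact ⟨Sum.inl y, Or.inl (inl_covBy_inl_iff.2 hy)⟩
    · exact ⟨Sum.inl y, Or.inr (inl_covBy_inl_iff.2 hy)⟩
  · obtain ⟨y, hy | hy⟩ := hQ x
    · exact ⟨Sum.inr y, Or.inl (inr_covBy_inr_iff.2 hy)⟩
    · exact ⟨Sum.inr y, Or.inr (inr_covBy_inr_iff.2 hy)⟩


abbrev chain2 : PartialOrder (Fin 2) := inferInstance

lemma fin2_zero_covBy_one : (0 : Fin 2) ⋖ 1 := by
  constructor
  · decide
  · intro c h1 h2
    omega

lemma fin2_cover_eq {q : Fin 2 × Fin 2} (h : q.1 ⋖ q.2) : q = (0, 1) := by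
  have h1 : q.1 < q.2 := h.lt
  have : q.1.val < q.2.val := h1
  have h2 : q.2.val < 2 := q.2.isLt
  ext <;> simp <;> omega

lemma nCovers_chain2 : nCovers chain2 = 1 := by
  rw [show nCovers chain2 = Nat.card {q : Fin 2 × Fin 2 // q.1 ⋖ q.2} from rfl]
  rw [Nat.card_eq_one_iff_unique]
  constructor
  · constructor
    rintro ⟨q, hq⟩ ⟨q', hq'⟩
    simp [Subtype.ext_iff, fin2_cover_eq hq, fin2_cover_eq hq']
  · exact ⟨⟨(0, 1), fin2_zero_covBy_one⟩⟩

lemma noIsolated_chain2 : NoIsolated chain2 := by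
  intro x
  have : x = 0 ∨ x = 1 := by omega
  rcases this with rfl | rfl
  · exact ⟨1, Or.inl fin2_zero_covBy_one⟩
  · exact ⟨0, Or.inr fin2_zero_covBy_one⟩

lemma ISO.sum_congr {α β γ δ : Type*} {P : PartialOrder α} {P' : PartialOrder β}
    {Q : PartialOrder γ} {Q' : PartialOrder δ}
    (h : ISO P P') (h' : ISO Q Q') : ISO (sumOrder P Q) (sumOrder P' Q') := by
  obtain ⟨e⟩ := h; obtain ⟨f⟩ := h'
  letI := P; letI := P'; letI := Q; letI := Q'
  refine ⟨{ toEquiv := Equiv.sumCongr e.toEquiv f.toEquiv, map_rel_iff' := ?_ }⟩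
  rintro (x | x) (y | y)
  · exact Sum.inl_le_inl_iff.trans (e.le_iff_le.trans Sum.inl_le_inl_iff.symm)
  · exact iff_of_false Sum.not_inl_le_inr Sum.not_inl_le_inr
  · exact iff_of_false Sum.not_inr_le_inl Sum.not_inr_le_inl
  · exact Sum.inr_le_inr_iff.trans (f.le_iff_le.trans Sum.inr_le_inr_iff.symm)


section ChainPair
variable {α : Type*} [Pα : PartialOrder α]

/-- `u < v` form a two-element connected component ("isolated 2-chain") -/
def IsChainPair (u v : α) : Prop :=
  u ⋖ v ∧ ∀ w, w ≠ u → w ≠ v → ¬ w ≤ u ∧ ¬ u ≤ w ∧ ¬ w ≤ v ∧ ¬ v ≤ w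

lemma IsChainPair.map {β : Type*} [Pβ : PartialOrder β] (e : α ≃o β) {u v : α}
    (h : IsChainPair u v) : IsChainPair (e u) (e v) := by
  refine ⟨(apply_covBy_apply_iff e).2 h.1, fun w hw1 hw2 => ?_⟩
  have h1 : e.symm w ≠ u := fun hh => hw1 (by rw [← hh]; simp)
  have h2 : e.symm w ≠ v := fun hh => hw2 (by rw [← hh]; simp)
  obtain ⟨c1, c2, c3, c4⟩ := h.2 (e.symm w) h1 h2
  refine ⟨fun hc => ?_, fun hc => ?_, fun hc => ?_, fun hc => ?_⟩
  · exact c1 (by simpa using e.symm.map_rel_iff.2 hc)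
  · exact c2 (by simpa using e.symm.map_rel_iff.2 hc)
  · exact c3 (by simpa using e.symm.map_rel_iff.2 hc)
  · exact c4 (by simpa using e.symm.map_rel_iff.2 hc)

lemma chainPair_decomp {u v : α} (h : IsChainPair u v) :
    ISO Pα (sumOrder (subOrder Pα fun x => x ≠ u ∧ x ≠ v) chain2) := by
  classical
  have huv : u ≠ v := h.1.lt.ne
  have hvu : ¬ v ≤ u := h.1.lt.not_ge
  refine ⟨{
    toFun := fun x => if h1 : x = u then Sum.inr 0 else if h2 : x = v then Sum.inr 1
      else Sum.inl ⟨x, h1, h2⟩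
    invFun := Sum.elim Subtype.val (fun i => if i = 0 then u else v)
    left_inv := ?_
    right_inv := ?_
    map_rel_iff' := ?_ }⟩
  · intro x
    by_cases h1 : x = u
    · subst h1; simp
    · by_cases h2 : x = v
      · subst h2; simp [h1]
      · simp [h1, h2]
  · rintro (⟨x, hx1, hx2⟩ | i)
    · simp [hx1, hx2]
    · fin_cases i
      · simp
      · simp [Ne.symm huv]
  · intro a b
    show (dite _ _ _ : _ ⊕ _) ≤ dite _ _ _ ↔ a ≤ b
    by_cases ha1 : a = u
    · by_cases hb1 : b = u
      · simp only [dif_pos ha1, dif_pos hb1]; rw [ha1, hb1]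
        exact iff_of_true le_rfl le_rfl
      · by_cases hb2 : b = v
        · simp only [dif_pos ha1, dif_neg hb1, dif_pos hb2]; rw [ha1, hb2]
          exact iff_of_true (Sum.inr_le_inr_iff.2 (by decide)) h.1.le
        · simp only [dif_pos ha1, dif_neg hb1, dif_neg hb2]
          refine iff_of_false Sum.not_inr_le_inl ?_
          rw [ha1]; exact (h.2 b hb1 hb2).2.1
    · by_cases ha2 : a = v
      · by_cases hb1 : b = u
        · simp only [dif_neg ha1, dif_pos ha2, dif_pos hb1]
          refine iff_of_false ?_ ?_
          · intro hc; exact absurd (Sum.inr_le_inr_iff.1 hc) (by decide)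
          · rw [ha2, hb1]; exact hvu
        · by_cases hb2 : b = v
          · simp only [dif_neg ha1, dif_pos ha2, dif_neg hb1, dif_pos hb2]; rw [ha2, hb2]
            exact iff_of_true le_rfl le_rfl
          · simp only [dif_neg ha1, dif_pos ha2, dif_neg hb1, dif_neg hb2]
            refine iff_of_false Sum.not_inr_le_inl ?_
            rw [ha2]; exact (h.2 b hb1 hb2).2.2.2
      · by_cases hb1 : b = u
        · simp only [dif_neg ha1, dif_neg ha2, dif_pos hb1]
          refine iff_of_false Sum.not_inl_le_inr ?_
          rw [hb1]; exact (h.2 a ha1 ha2).1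
        · by_cases hb2 : b = v
          · simp only [dif_neg ha1, dif_neg ha2, dif_neg hb1, dif_pos hb2]
            refine iff_of_false Sum.not_inl_le_inr ?_
            rw [hb2]; exact (h.2 a ha1 ha2).2.2.1
          · simp only [dif_neg ha1, dif_neg ha2, dif_neg hb1, dif_neg hb2]
            exact Sum.inl_le_inl_iff.trans Subtype.mk_le_mk

end ChainPair


section ChainPair2
variable {α : Type*} [Pα : PartialOrder α]

lemma chainPair_eq_or_disjoint {u v u' v' : α}
    (h : IsChainPair u v) (h' : IsChainPair u' v') :
    (u' = u ∧ v' = v) ∨ (u' ≠ u ∧ u' ≠ v ∧ v' ≠ u ∧ v' ≠ v) := by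
  by_cases h1 : u' = u
  · left
    refine ⟨h1, ?_⟩
    by_contra h2
    have hne : v' ≠ u := by rw [← h1]; exact (h'.1.lt.ne).symm
    exact (h.2 v' hne h2).2.1 (h1 ▸ h'.1.le)
  · by_cases h2 : u' = v
    · exfalso
      have l1 : v < v' := h2 ▸ h'.1.lt
      have hvv' : v' ≠ v := l1.ne'
      have hv'u : v' ≠ u := by
        intro e
        exact absurd (e ▸ l1) h.1.lt.asymm
      exact absurd l1.le (h.2 v' hv'u hvv').2.2.2
    · by_cases h3 : v' = u
      · exfalso
        have l1 : u' < u := h3 ▸ h'.1.lt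
        exact absurd l1.le (h.2 u' h1 h2).1
      · by_cases h4 : v' = v
        · exfalso
          have l1 : u' < v := h4 ▸ h'.1.lt
          exact absurd l1.le (h.2 u' h1 h2).2.2.1
        · exact Or.inr ⟨h1, h2, h3, h4⟩

lemma compl_iso_of_chainPairs {u v u' v' : α}
    (h : IsChainPair u v) (h' : IsChainPair u' v') :
    ISO (subOrder Pα fun x => x ≠ u ∧ x ≠ v)
      (subOrder Pα fun x => x ≠ u' ∧ x ≠ v') := by
  classical
  rcases chainPair_eq_or_disjoint h h' with ⟨rfl, rfl⟩ | ⟨d1, d2, d3, d4⟩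
  · exact ISO.refl _
  · refine ⟨{
      toFun := fun t => if h1 : t.val = u' then ⟨u, Ne.symm d1, Ne.symm d3⟩
        else if h2 : t.val = v' then ⟨v, Ne.symm d2, Ne.symm d4⟩
        else ⟨t.val, h1, h2⟩
      invFun := fun s => if h1 : s.val = u then ⟨u', d1, d2⟩
        else if h2 : s.val = v then ⟨v', d3, d4⟩
        else ⟨s.val, h1, h2⟩
      left_inv := ?_
      right_inv := ?_
      map_rel_iff' := ?_ }⟩
    · rintro ⟨x, hx1, hx2⟩
      by_cases t1 : x = u'
      · simp only [dif_pos t1, dif_pos rfl]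
        exact Subtype.ext t1.symm
      · by_cases t2 : x = v'
        · simp only [dif_neg t1, dif_pos t2, dif_neg h.1.lt.ne', dif_pos rfl]
          exact Subtype.ext t2.symm
        · simp only [dif_neg t1, dif_neg t2, dif_neg hx1, dif_neg hx2]
    · rintro ⟨y, hy1, hy2⟩
      by_cases t1 : y = u
      · simp only [dif_pos t1, dif_pos rfl]
        exact Subtype.ext t1.symm
      · by_cases t2 : y = v
        · simp only [dif_neg t1, dif_pos t2, dif_neg h'.1.lt.ne', dif_pos rfl]
          exact Subtype.ext t2.symm
        · simp only [dif_neg t1, dif_neg t2, dif_neg hy1, dif_neg hy2]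
    · rintro ⟨x, hx1, hx2⟩ ⟨y, hy1, hy2⟩
      show (dite _ _ _ : Subtype _).val ≤ (dite _ _ _ : Subtype _).val ↔ x ≤ y
      by_cases a1 : x = u'
      · by_cases b1 : y = u'
        · simp only [dif_pos a1, dif_pos b1, Subtype.mk_le_mk]
          rw [a1, b1]
          exact iff_of_true le_rfl le_rfl
        · by_cases b2 : y = v'
          · simp only [dif_pos a1, dif_neg b1, dif_pos b2, Subtype.mk_le_mk]
            rw [a1, b2]
            exact iff_of_true h.1.le h'.1.le
          · simp only [dif_pos a1, dif_neg b1, dif_neg b2, Subtype.mk_le_mk]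
            rw [a1]
            exact iff_of_false (h.2 y hy1 hy2).2.1 (h'.2 y b1 b2).2.1
      · by_cases a2 : x = v'
        · by_cases b1 : y = u'
          · simp only [dif_neg a1, dif_pos a2, dif_pos b1, Subtype.mk_le_mk]
            rw [a2, b1]
            exact iff_of_false h.1.lt.not_ge h'.1.lt.not_ge
          · by_cases b2 : y = v'
            · simp only [dif_neg a1, dif_pos a2, dif_neg b1, dif_pos b2, Subtype.mk_le_mk]
              rw [a2, b2]
              exact iff_of_true le_rfl le_rfl
            · simp only [dif_neg a1, dif_pos a2, dif_neg b1, dif_neg b2, Subtype.mk_le_mk]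
              rw [a2]
              exact iff_of_false (h.2 y hy1 hy2).2.2.2 (h'.2 y b1 b2).2.2.2
        · by_cases b1 : y = u'
          · simp only [dif_neg a1, dif_neg a2, dif_pos b1, Subtype.mk_le_mk]
            rw [b1]
            exact iff_of_false (h.2 x hx1 hx2).1 (h'.2 x a1 a2).1
          · by_cases b2 : y = v'
            · simp only [dif_neg a1, dif_neg a2, dif_neg b1, dif_pos b2, Subtype.mk_le_mk]
              rw [b2]
              exact iff_of_false (h.2 x hx1 hx2).2.2.1 (h'.2 x a1 a2).2.2.1
            · simp only [dif_neg a1, dif_neg a2, dif_neg b1, dif_neg b2, Subtype.mk_le_mk]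

lemma compl_iso_restrict {β : Type*} [Pβ : PartialOrder β] (e : α ≃o β) (u v : α) :
    ISO (subOrder Pα fun x => x ≠ u ∧ x ≠ v)
      (subOrder Pβ fun y => y ≠ e u ∧ y ≠ e v) := by
  refine ⟨{ toEquiv := e.toEquiv.subtypeEquiv (fun x => ?_), map_rel_iff' := ?_ }⟩
  · simp
  · rintro ⟨x, hx⟩ ⟨y, hy⟩
    show (⟨e x, _⟩ : Subtype _) ≤ ⟨e y, _⟩ ↔ _
    exact e.le_iff_le

lemma isChainPair_sum_inr :
    IsChainPair (Sum.inr 0 : α ⊕ Fin 2) (Sum.inr 1) := by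
  refine ⟨inr_covBy_inr_iff.2 fin2_zero_covBy_one, ?_⟩
  rintro (w | i) hw1 hw2
  · exact ⟨Sum.not_inl_le_inr, Sum.not_inr_le_inl, Sum.not_inl_le_inr, Sum.not_inr_le_inl⟩
  · exfalso
    have h0 : i ≠ 0 := fun e => hw1 (by rw [e])
    have h1 : i ≠ 1 := fun e => hw2 (by rw [e])
    omega

lemma compl_inr_iso :
    ISO (subOrder (sumOrder Pα chain2)
      (fun w => w ≠ Sum.inr 0 ∧ w ≠ Sum.inr 1)) Pα := by
  have g : ∀ x : α, (Sum.inl x : α ⊕ Fin 2) ≠ Sum.inr 0 ∧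
      (Sum.inl x : α ⊕ Fin 2) ≠ Sum.inr 1 := by simp
  refine ISO.symm ⟨{
    toEquiv := Equiv.ofBijective (fun x => ⟨Sum.inl x, g x⟩) ⟨?_, ?_⟩
    map_rel_iff' := ?_ }⟩
  · intro a b hab
    simpa [Subtype.ext_iff] using hab
  · rintro ⟨(x | i), h1, h2⟩
    · exact ⟨x, rfl⟩
    · exfalso
      have h0 : i ≠ 0 := fun e => h1 (by rw [e])
      have h1' : i ≠ 1 := fun e => h2 (by rw [e])
      omega
  · intro a b
    show (⟨Sum.inl a, _⟩ : Subtype _) ≤ ⟨Sum.inl b, _⟩ ↔ _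
    exact Sum.inl_le_inl_iff

end ChainPair2


section Counting
variable {α : Type*} [Pα : PartialOrder α]

lemma isChainPair_of_unique [Finite α] {u v : α}
    (huv : u ⋖ v)
    (hu : ∀ s t : α, s ⋖ t → s = u ∨ t = u → s = u ∧ t = v)
    (hv : ∀ s t : α, s ⋖ t → s = v ∨ t = v → s = u ∧ t = v) :
    IsChainPair u v := by
  have hne : u ≠ v := huv.lt.ne
  refine ⟨huv, fun w hw1 hw2 => ?_⟩
  have c1 : ¬ w ≤ u := by
    intro hc
    obtain ⟨z, hz1, hz2⟩ := exists_le_covBy_of_lt (lt_of_le_of_ne hc hw1)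
    obtain ⟨e1, e2⟩ := hu z u hz2 (Or.inr rfl)
    exact hne (e1 ▸ e2)
  have c3 : ¬ w ≤ v := by
    intro hc
    obtain ⟨z, hz1, hz2⟩ := exists_le_covBy_of_lt (lt_of_le_of_ne hc hw2)
    obtain ⟨e1, e2⟩ := hv z v hz2 (Or.inr rfl)
    exact c1 (e1 ▸ hz1)
  have c2 : ¬ u ≤ w := by
    intro hc
    obtain ⟨z, hz1, hz2⟩ := exists_covBy_le_of_lt (lt_of_le_of_ne hc (Ne.symm hw1))
    obtain ⟨e1, e2⟩ := hu u z hz1 (Or.inl rfl)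
    -- z = v, v ≤ w
    have hvw : v ≤ w := e2 ▸ hz2
    have hvltw : v < w := lt_of_le_of_ne hvw (Ne.symm hw2)
    obtain ⟨z', hz1', hz2'⟩ := exists_covBy_le_of_lt hvltw
    obtain ⟨e1', _⟩ := hv v z' hz1' (Or.inl rfl)
    exact hne e1'.symm
  have c4 : ¬ v ≤ w := by
    intro hc
    obtain ⟨z, hz1, hz2⟩ := exists_covBy_le_of_lt (lt_of_le_of_ne hc (Ne.symm hw2))
    obtain ⟨e1, _⟩ := hv v z hz1 (Or.inl rfl)
    exact hne e1.symm
  exact ⟨c1, c2, c3, c4⟩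

open Finset in
lemma exists_chainPair [Fintype α]
    (hiso : NoIsolated Pα) (hlt : 3 * nCovers Pα < 2 * Fintype.card α) :
    ∃ u v : α, IsChainPair u v := by
  classical
  by_contra hno
  push_neg at hno
  set E : Finset (α × α) := univ.filter (fun q : α × α => q.1 ⋖ q.2) with hEdef
  have hE : nCovers Pα = E.card := by
    rw [show nCovers Pα = Nat.card {q : α × α // q.1 ⋖ q.2} from rfl,
      Nat.card_eq_fintype_card, Fintype.card_subtype]
  set deg : α → ℕ := fun x => (E.filter (fun q => q.1 = x ∨ q.2 = x)).card with hdeg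
  -- total degree
  have hsum : ∑ x ∈ univ, deg x = 2 * E.card := by
    have : ∀ x, deg x = ∑ q ∈ E, if q.1 = x ∨ q.2 = x then 1 else 0 := by
      intro x; rw [hdeg]; exact Finset.card_filter _ _
    calc ∑ x ∈ univ, deg x
        = ∑ x ∈ univ, ∑ q ∈ E, if q.1 = x ∨ q.2 = x then 1 else 0 := by
          exact Finset.sum_congr rfl fun x _ => this x
      _ = ∑ q ∈ E, ∑ x ∈ univ, if q.1 = x ∨ q.2 = x then 1 else 0 := Finset.sum_comm
      _ = ∑ q ∈ E, 2 := by
          refine Finset.sum_congr rfl fun q hq => ?_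
          have hq' : q.1 ⋖ q.2 := (Finset.mem_filter.1 hq).2
          rw [← Finset.card_filter]
          have : univ.filter (fun x => q.1 = x ∨ q.2 = x) = {q.1, q.2} := by
            ext y
            simp [eq_comm, or_comm]
          rw [this]
          exact Finset.card_pair hq'.lt.ne
      _ = 2 * E.card := by rw [Finset.sum_const, smul_eq_mul, mul_comm]
  -- every point has degree ≥ 1
  have hdegpos : ∀ x, 1 ≤ deg x := by
    intro x
    obtain ⟨y, hy | hy⟩ := hiso x
    · refine Finset.card_pos.2 ⟨(x, y), ?_⟩
      exact Finset.mem_filter.2 ⟨Finset.mem_filter.2 ⟨Finset.mem_univ _, hy⟩, Or.inl rfl⟩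
    · refine Finset.card_pos.2 ⟨(y, x), ?_⟩
      exact Finset.mem_filter.2 ⟨Finset.mem_filter.2 ⟨Finset.mem_univ _, hy⟩, Or.inr rfl⟩
  -- no cover has both endpoints of degree one
  have hnoleaf : ∀ q ∈ E, ¬ (deg q.1 = 1 ∧ deg q.2 = 1) := by
    rintro ⟨u, v⟩ hq ⟨hdu, hdv⟩
    have hcov : u ⋖ v := (Finset.mem_filter.1 hq).2
    have memu : (u, v) ∈ E.filter (fun q => q.1 = u ∨ q.2 = u) :=
      Finset.mem_filter.2 ⟨hq, Or.inl rfl⟩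
    have memv : (u, v) ∈ E.filter (fun q => q.1 = v ∨ q.2 = v) :=
      Finset.mem_filter.2 ⟨hq, Or.inr rfl⟩
    obtain ⟨e, he⟩ := Finset.card_eq_one.1 hdu
    obtain ⟨e', he'⟩ := Finset.card_eq_one.1 hdv
    have heq : e = (u, v) := by
      have := he ▸ memu; exact (Finset.mem_singleton.1 this).symm
    have heq' : e' = (u, v) := by
      have := he' ▸ memv; exact (Finset.mem_singleton.1 this).symm
    subst heq; subst heq'
    refine absurd (isChainPair_of_unique hcov ?_ ?_) (hno u v)
    · intro s t hst hor
      have : (s, t) ∈ E.filter (fun q => q.1 = u ∨ q.2 = u) :=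
        Finset.mem_filter.2 ⟨Finset.mem_filter.2 ⟨Finset.mem_univ _, hst⟩,
          by rcases hor with h | h <;> [exact Or.inl h; exact Or.inr h]⟩
      rw [he] at this
      have := Finset.mem_singleton.1 this
      exact ⟨congrArg Prod.fst this, congrArg Prod.snd this⟩
    · intro s t hst hor
      have : (s, t) ∈ E.filter (fun q => q.1 = v ∨ q.2 = v) :=
        Finset.mem_filter.2 ⟨Finset.mem_filter.2 ⟨Finset.mem_univ _, hst⟩,
          by rcases hor with h | h <;> [exact Or.inl h; exact Or.inr h]⟩
      rw [he'] at this
      have := Finset.mem_singleton.1 this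
      exact ⟨congrArg Prod.fst this, congrArg Prod.snd this⟩
  -- leaves inject into edges
  set L : Finset α := univ.filter (fun x => deg x = 1) with hL
  have hLE : L.card ≤ E.card := by
    have hchoice : ∀ x, deg x = 1 →
        ∃ e, E.filter (fun q => q.1 = x ∨ q.2 = x) = {e} :=
      fun x hx => Finset.card_eq_one.1 hx
    set f : α → α × α := fun x =>
      if hx : deg x = 1 then (hchoice x hx).choose else (x, x) with hf
    have hfx : ∀ x, deg x = 1 → f x ∈ E ∧ ((f x).1 = x ∨ (f x).2 = x) := by
      intro x hx
      have hspec := (hchoice x hx).choose_spec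
      have : f x ∈ E.filter (fun q => q.1 = x ∨ q.2 = x) := by
        rw [hf]; simp only [dif_pos hx]
        exact Finset.singleton_subset_iff.1 (le_of_eq hspec.symm)
      exact ⟨(Finset.mem_filter.1 this).1, (Finset.mem_filter.1 this).2⟩
    refine Finset.card_le_card_of_injOn f ?_ ?_
    · intro x hx
      exact (hfx x (Finset.mem_filter.1 hx).2).1
    · intro x hx y hy hxy
      by_contra hne
      have hdx := (Finset.mem_filter.1 hx).2
      have hdy := (Finset.mem_filter.1 hy).2
      obtain ⟨hxE, hx12⟩ := hfx x hdx
      obtain ⟨hyE, hy12⟩ := hfx y hdy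
      rw [hxy] at hx12
      -- x and y are the two distinct endpoints of the edge f y
      have : deg (f y).1 = 1 ∧ deg (f y).2 = 1 := by
        rcases hx12 with h1 | h1 <;> rcases hy12 with h2 | h2
        · exact absurd (h1.symm.trans h2) hne
        · exact ⟨h1.symm ▸ hdx, h2.symm ▸ hdy⟩
        · exact ⟨h2.symm ▸ hdy, h1.symm ▸ hdx⟩
        · exact absurd (h1.symm.trans h2) hne
      exact hnoleaf (f y) hyE this
  -- sum lower bound
  have hsplit := Finset.sum_filter_add_sum_filter_not univ (fun x => deg x = 1) deg
  have hsumL : ∑ x ∈ univ.filter (fun x => deg x = 1), deg x = L.card := by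
    have h1 : ∑ x ∈ univ.filter (fun x => deg x = 1), deg x
        = ∑ _x ∈ univ.filter (fun x => deg x = 1), 1 :=
      Finset.sum_congr rfl (fun x hx => (Finset.mem_filter.1 hx).2)
    rw [h1, Finset.sum_const, smul_eq_mul, mul_one, hL]
  have hsumNL : 2 * (univ.filter (fun x => ¬ deg x = 1)).card ≤
      ∑ x ∈ univ.filter (fun x => ¬ deg x = 1), deg x := by
    rw [mul_comm, ← smul_eq_mul, ← Finset.sum_const]
    refine Finset.sum_le_sum fun x hx => ?_
    have h1 := hdegpos x
    have h2 := (Finset.mem_filter.1 hx).2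
    omega
  have hcards : L.card + (univ.filter (fun x => ¬ deg x = 1)).card = Fintype.card α := by
    have h1 := Finset.card_filter_add_card_filter_not
      (s := (univ : Finset α)) (p := fun x => deg x = 1)
    rw [Finset.card_univ] at h1
    rw [hL]
    exact h1
  rw [hE] at hlt
  omega

end Counting


lemma covBy_ne' {α : Type*} [Pα : PartialOrder α] {u v : α} (h : u ⋖ v) : u ≠ v :=
  h.lt.ne

section PullbackLemmas
variable {α β : Type*}

/-- order isomorphism from a pullback order to the original -/
def pullbackIso (e : α ≃ β) (S : PartialOrder β) :
    @OrderIso α β (pullback e S).toPreorder.toLE S.toPreorder.toLE :=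
  { toEquiv := e, map_rel_iff' := Iff.rfl }

lemma pullback_chainPair (e : α ≃ β) (S : PartialOrder β) {u v : β}
    (h : IsChainPair (Pα := S) u v) :
    IsChainPair (Pα := pullback e S) (e.symm u) (e.symm v) := by
  letI := S
  refine IsChainPair.map (Pα := S) (Pβ := pullback e S)
    ({ toEquiv := e.symm, map_rel_iff' := ?_ }) h
  intro a b
  show e (e.symm a) ≤ e (e.symm b) ↔ _
  rw [Equiv.apply_symm_apply, Equiv.apply_symm_apply]

lemma pullback_compl_iso (e : α ≃ β) (S : PartialOrder β) (u v : β) :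
    ISO (subOrder (pullback e S) (fun w => w ≠ e.symm u ∧ w ≠ e.symm v))
      (subOrder S (fun w => w ≠ u ∧ w ≠ v)) := by
  letI := S
  refine ⟨{ toEquiv := e.subtypeEquiv (fun x => ?_), map_rel_iff' := ?_ }⟩
  · constructor
    · rintro ⟨h1, h2⟩
      refine ⟨fun hc => h1 ?_, fun hc => h2 ?_⟩
      · rw [← hc]; exact (e.symm_apply_apply x).symm
      · rw [← hc]; exact (e.symm_apply_apply x).symm
    · rintro ⟨h1, h2⟩
      refine ⟨fun hc => h1 ?_, fun hc => h2 ?_⟩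
      · rw [hc]; exact e.apply_symm_apply u
      · rw [hc]; exact e.apply_symm_apply v
  · rintro ⟨x, hx⟩ ⟨y, hy⟩
    show (⟨e x, _⟩ : Subtype _) ≤ ⟨e y, _⟩ ↔ _
    rw [Subtype.mk_le_mk]
    exact Iff.rfl

end PullbackLemmas

section AddChain
variable {p : ℕ}

/-- add a disjoint 2-chain to a partial order on `Fin p` -/
def addChain (P : PartialOrder (Fin p)) : PartialOrder (Fin (p + 2)) :=
  pullback (finSumFinEquiv.symm : Fin (p + 2) ≃ (Fin p ⊕ Fin 2)) (sumOrder P chain2)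

lemma iso_addChain (P : PartialOrder (Fin p)) :
    ISO (addChain P) (sumOrder P chain2) := iso_pullback _ _

lemma nCovers_addChain (P : PartialOrder (Fin p)) :
    nCovers (addChain P) = nCovers P + 1 := by
  rw [(iso_addChain P).nCovers_eq, nCovers_sumOrder, nCovers_chain2]

lemma noIsolated_addChain {P : PartialOrder (Fin p)} (h : NoIsolated P) :
    NoIsolated (addChain P) :=
  (iso_addChain P).noIsolated_iff.2 (noIsolated_sumOrder h noIsolated_chain2)

lemma addChain_chainPair (P : PartialOrder (Fin p)) :
    IsChainPair (Pα := addChain P)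
      ((finSumFinEquiv.symm : Fin (p + 2) ≃ (Fin p ⊕ Fin 2)).symm (Sum.inr 0))
      ((finSumFinEquiv.symm : Fin (p + 2) ≃ (Fin p ⊕ Fin 2)).symm (Sum.inr 1)) :=
  pullback_chainPair _ _ (isChainPair_sum_inr (Pα := P))

lemma addChain_compl_iso (P : PartialOrder (Fin p)) :
    ISO (subOrder (addChain P)
      (fun w => w ≠ (finSumFinEquiv.symm : Fin (p + 2) ≃ (Fin p ⊕ Fin 2)).symm (Sum.inr 0) ∧
        w ≠ (finSumFinEquiv.symm : Fin (p + 2) ≃ (Fin p ⊕ Fin 2)).symm (Sum.inr 1))) P :=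
  (pullback_compl_iso _ _ _ _).trans (compl_inr_iso (Pα := P))

lemma addChain_congr {P P' : PartialOrder (Fin p)} (h : ISO P P') :
    ISO (addChain P) (addChain P') :=
  ((iso_addChain P).trans (ISO.sum_congr h (ISO.refl chain2))).trans (iso_addChain P').symm

lemma addChain_inj {P P' : PartialOrder (Fin p)}
    (h : ISO (addChain P) (addChain P')) : ISO P P' := by
  obtain ⟨g⟩ := h
  have cpA := addChain_chainPair P
  have cpA' := IsChainPair.map (Pα := addChain P) (Pβ := addChain P') g cpA
  have cpB := addChain_chainPair P'
  refine ((addChain_compl_iso P).symm.trans ?_).trans (addChain_compl_iso P')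
  refine ISO.trans (compl_iso_restrict (Pα := addChain P) (Pβ := addChain P') g _ _) ?_
  exact compl_iso_of_chainPairs (Pα := addChain P') cpA' cpB

lemma noIsolated_sum_left {α β : Type*} {P : PartialOrder α} {Q : PartialOrder β}
    (h : NoIsolated (sumOrder P Q)) : NoIsolated P := by
  letI := P; letI := Q
  intro x
  obtain ⟨y, hy⟩ := h (Sum.inl x)
  rcases y with y | y
  · rcases hy with hy | hy
    · exact ⟨y, Or.inl (inl_covBy_inl_iff.1 hy)⟩
    · exact ⟨y, Or.inr (inl_covBy_inl_iff.1 hy)⟩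
  · rcases hy with hy | hy
    · exact absurd hy not_inl_covBy_inr
    · exact absurd hy not_inr_covBy_inl

lemma addChain_surj {a : ℕ} (Q : PartialOrder (Fin (p + 2)))
    (hcov : nCovers Q = a + 1) (hiso : NoIsolated Q) (h3 : 3 * (a + 1) < 2 * (p + 2)) :
    ∃ P : PartialOrder (Fin p), nCovers P = a ∧ NoIsolated P ∧ ISO (addChain P) Q := by
  classical
  obtain ⟨u, v, hcp⟩ := exists_chainPair (Pα := Q) hiso
    (by rw [hcov, Fintype.card_fin]; exact h3)
  have hne : u ≠ v := covBy_ne' (Pα := Q) hcp.1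
  have hdec : ISO Q (sumOrder (subOrder Q fun x => x ≠ u ∧ x ≠ v) chain2) :=
    chainPair_decomp (Pα := Q) hcp
  have hcount : nCovers Q = nCovers (subOrder Q fun x => x ≠ u ∧ x ≠ v) + 1 := by
    rw [hdec.nCovers_eq, nCovers_sumOrder, nCovers_chain2]
  have hcard : Fintype.card {x : Fin (p + 2) // x ≠ u ∧ x ≠ v} = p := by
    rw [Fintype.card_subtype]
    have heq : Finset.univ.filter (fun x : Fin (p + 2) => x ≠ u ∧ x ≠ v) =
        Finset.univ \ {u, v} := by
      ext x
      simp [not_or, and_comm]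
    rw [heq, Finset.card_sdiff_of_subset (Finset.subset_univ _), Finset.card_univ, Fintype.card_fin,
      Finset.card_pair hne]
    omega
  let e : Fin p ≃ {x : Fin (p + 2) // x ≠ u ∧ x ≠ v} :=
    (Fintype.equivFinOfCardEq hcard).symm
  have hPiso : ISO (pullback e (subOrder Q fun x => x ≠ u ∧ x ≠ v))
      (subOrder Q fun x => x ≠ u ∧ x ≠ v) := iso_pullback e _
  refine ⟨pullback e (subOrder Q fun x => x ≠ u ∧ x ≠ v), ?_, ?_, ?_⟩
  · rw [hPiso.nCovers_eq]
    omega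
  · refine hPiso.noIsolated_iff.2 ?_
    exact noIsolated_sum_left (P := subOrder Q fun x => x ≠ u ∧ x ≠ v) (Q := chain2)
      (hdec.noIsolated_iff.1 hiso)
  · exact ((iso_addChain _).trans
      ((ISO.sum_congr hPiso (ISO.refl chain2)).trans hdec.symm))

end AddChain


theorem H0_step (p a : ℕ) (h3 : 3 * (a + 1) < 2 * (p + 2)) :
    H0 p a = H0 (p + 2) (a + 1) := by
  classical
  let f : {P : PartialOrder (Fin p) // nCovers P = a ∧ NoIsolated P} →
      {P : PartialOrder (Fin (p + 2)) // nCovers P = a + 1 ∧ NoIsolated P} :=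
    fun X => ⟨addChain X.val,
      by rw [nCovers_addChain, X.2.1], noIsolated_addChain X.2.2⟩
  have hresp : ∀ X Y, ((posetIsoSetoid p).comap
      (Subtype.val : {P : PartialOrder (Fin p) // nCovers P = a ∧ NoIsolated P} → _)).r X Y →
      ((posetIsoSetoid (p + 2)).comap Subtype.val).r (f X) (f Y) :=
    fun X Y h => addChain_congr h
  show Nat.card _ = Nat.card _
  refine Nat.card_eq_of_bijective (Quotient.map f hresp) ⟨?_, ?_⟩
  · refine fun x y => Quotient.inductionOn₂ x y ?_
    intro X Y hF
    exact Quotient.sound (addChain_inj (Quotient.exact hF))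
  · refine fun y => Quotient.inductionOn y ?_
    intro Y
    obtain ⟨P, h1, h2, hI⟩ := addChain_surj Y.val Y.2.1 Y.2.2 h3
    exact ⟨⟦⟨P, h1, h2⟩⟧, Quotient.sound hI⟩

/-- For `a ≥ 2n`, `H₀ (2a - n) a = H₀ (3n) (2n)`. -/
theorem H0_diag (n a : ℕ) (h : 2 * n ≤ a) : H0 (2 * a - n) a = H0 (3 * n) (2 * n) := by
  induction a, h using Nat.le_induction with
  | base => congr 1; omega
  | succ a ha ih =>
      have h2 : 2 * (a + 1) - n = (2 * a - n) + 2 := by omega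
      rw [h2, ← H0_step (2 * a - n) a (by omega)]
      exact ih
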